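/- Let X be a nonempty finite type and μ a probability distribution (PMF) on X, regarded as the single-shot output distribution of a physical system; the n-fold system outputs n i.i.d. samples, i.e. the product distribution μ^⊗n on Fin n → X. Suppose there are m : ℕ → ℕ and a family of functions A'_n : {0,1}^(m n) → X such that for every n the total variation distance between the pushforward of U^(m n) under A'_n and μ is at most 2^(−n) (an efficient classical simulation, with the efficiency requirement dropped). Let l : ℕ → ℕ be strictly increasing. Define Ā_n : {0,1}^(n · m n) → (Fin n → X) by splitting the input into n consecutive blocks of length m n and applying A'_n to each block. Let G_k : {0,1}^k → {0,1}^(l k · m (l k)) be a family of functions satisfying: for every family of tests D_k : {0,1}^(l k · m (l k)) → Bool, the function k ↦ |Pr_{s ← U^k}[D_k (G_k s) = true] − Pr_{u ← U^(l k · m (l k))}[D_k u = true]| is negligible. Define B_k := Ā_{l k} ∘ G_k : {0,1}^k → (Fin (l k) → X). Then for every family of tests T_k : (Fin (l k) → X) → Bool, the function k ↦ |Pr_{s ← U^k}[T_k (B_k s) = true] − Pr_{x ← μ^⊗(l k)}[T_k x = true]| is negligible. -/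

import Mathlib

/-- The uniform probability distribution on bit strings of length `n`. -/
noncomputable def unif (n : ℕ) : PMF (Fin n → Bool) :=
  PMF.uniformOfFintype (Fin n → Bool)

/-- The probability, under the distribution `μ`, that the test `D` outputs `true`. -/
noncomputable def prTrue {α : Type*} (μ : PMF α) (D : α → Bool) : ℝ :=
  (μ.toOuterMeasure {x | D x = true}).toReal

/-- A function `f : ℕ → ℝ` is negligible if for every polynomial `p` that is positive on `ℕ`
there exists `N` such that `|f k| < 1 / p k` for all `k ≥ N`. -/
def Negligible (f : ℕ → ℝ) : Prop :=
  ∀ p : Polynomial ℝ, (∀ k : ℕ, 0 < p.eval (k : ℝ)) →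
    ∃ N : ℕ, ∀ k ≥ N, |f k| < 1 / p.eval (k : ℝ)

/-- The `n`-fold product distribution `μ^⊗n` on `Fin n → X`: the joint distribution of `n`
independent samples from `μ`. -/
noncomputable def prodPMF {X : Type*} [Fintype X] (μ : PMF X) (n : ℕ) :
    PMF (Fin n → X) :=
  PMF.ofFintype (fun x => ∏ i, μ (x i)) (by
    rw [← Fintype.prod_sum]
    have h : ∑ a : X, μ a = 1 := by rw [← μ.tsum_coe, tsum_fintype]
    simp [h])

/-- Total variation distance between two PMFs on a finite type. -/
noncomputable def tvDist {α : Type*} [Fintype α] (μ ν : PMF α) : ℝ :=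
  (1 / 2) * ∑ x : α, |(μ x).toReal - (ν x).toReal|

/-- Repeat the single-shot simulator `A' n : {0,1}^(m n) → X` on `n` consecutive blocks of
length `m n` of the input. -/
def Abar {X : Type*} (m : ℕ → ℕ) (A' : ∀ n : ℕ, (Fin (m n) → Bool) → X) (n : ℕ)
    (u : Fin (n * m n) → Bool) : Fin n → X :=
  fun i => A' n (fun j => u ⟨i.val * m n + j.val, by
    have hi := i.isLt
    have hj := j.isLt
    nlinarith⟩)

/-!
Hybrid argument. Feeding truly uniform bits to `Abar` produces exactly `n` independent runs of the
single-shot simulator, and total variation is subadditive over products, so this hybrid is within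
`2 n 2^(-n)` of `μ^⊗n` for every test. Replacing the uniform bits by the output of `G` costs the
advantage of the test `T ∘ Abar` against `G`, which is negligible. Since `l k ≥ k`, the error
`2 l k 2^(-l k)` decays faster than any polynomial in `k`.
-/

section Distributions

variable {α β : Type*}

theorem prTrue_map (μ : PMF α) (f : α → β) (D : β → Bool) :
    prTrue (μ.map f) D = prTrue μ fun a => D (f a) := by
  rw [prTrue, prTrue, PMF.toOuterMeasure_map_apply]
  rfl

theorem prTrue_eq_sum [Fintype α] (μ : PMF α) (D : α → Bool) :
    prTrue μ D = ∑ x, if D x then (μ x).toReal else 0 := by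
  classical
  rw [prTrue, PMF.toOuterMeasure_apply, tsum_fintype,
    ENNReal.toReal_sum fun x _ => (Set.indicator_le_self _ _ x).trans_lt (μ.apply_lt_top x) |>.ne]
  refine Finset.sum_congr rfl fun x _ => ?_
  by_cases h : D x <;> simp [h]

theorem abs_prTrue_sub_le_two_mul_tvDist [Fintype α] (μ ν : PMF α) (D : α → Bool) :
    |prTrue μ D - prTrue ν D| ≤ 2 * tvDist μ ν := by
  rw [prTrue_eq_sum, prTrue_eq_sum, ← Finset.sum_sub_distrib, tvDist, ← mul_assoc,
    mul_one_div_cancel two_ne_zero, one_mul]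
  refine (Finset.abs_sum_le_sum_abs _ _).trans (Finset.sum_le_sum fun x _ => ?_)
  by_cases h : D x <;> simp [h]

theorem PMF.sum_toReal [Fintype α] (μ : PMF α) : ∑ x, (μ x).toReal = 1 := by
  rw [← ENNReal.toReal_sum fun x _ => μ.apply_ne_top x, ← tsum_fintype (L := .unconditional _),
    μ.tsum_coe, ENNReal.toReal_one]

end Distributions

section ProductDistributions

variable {X S : Type*} [Fintype X] [Fintype S]

theorem prodPMF_apply_toReal (μ : PMF X) {n : ℕ} (x : Fin n → X) :
    (prodPMF μ n x).toReal = ∏ i, (μ (x i)).toReal := by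
  rw [prodPMF, PMF.ofFintype_apply, ENNReal.toReal_prod]

theorem sum_abs_prod_sub_prod_le {f g : X → ℝ} (hf₀ : 0 ≤ f) (hg₀ : 0 ≤ g)
    (hf₁ : ∑ a, f a = 1) (hg₁ : ∑ a, g a = 1) (n : ℕ) :
    ∑ x : Fin n → X, |∏ i, f (x i) - ∏ i, g (x i)| ≤ n * ∑ a, |f a - g a| := by
  induction n with
  | zero => simp
  | succ n ih =>
    have hg_prod : ∑ y : Fin n → X, ∏ i, g (y i) = 1 := by
      rw [← Fintype.prod_sum, hg₁, Finset.prod_const_one]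
    have hstep : ∀ a (y : Fin n → X),
        |f a * ∏ i, f (y i) - g a * ∏ i, g (y i)|
          ≤ f a * |∏ i, f (y i) - ∏ i, g (y i)| + |f a - g a| * ∏ i, g (y i) := fun a y => by
      have hG : 0 ≤ ∏ i, g (y i) := Finset.prod_nonneg fun i _ => hg₀ (y i)
      calc _ = |f a * (∏ i, f (y i) - ∏ i, g (y i)) + (f a - g a) * ∏ i, g (y i)| := by ring_nf
        _ ≤ _ := by
          refine (abs_add_le _ _).trans_eq ?_
          rw [abs_mul, abs_mul, abs_of_nonneg (hf₀ a), abs_of_nonneg hG]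
    calc ∑ x : Fin (n + 1) → X, |∏ i, f (x i) - ∏ i, g (x i)|
        = ∑ a, ∑ y : Fin n → X,
            |f a * ∏ i, f (y i) - g a * ∏ i, g (y i)| := by
          rw [← (Fin.consEquiv fun _ => X).sum_comp, Fintype.sum_prod_type]
          simp [Fin.prod_univ_succ]
      _ ≤ ∑ a, ∑ y : Fin n → X,
            (f a * |∏ i, f (y i) - ∏ i, g (y i)| + |f a - g a| * ∏ i, g (y i)) :=
          Finset.sum_le_sum fun a _ => Finset.sum_le_sum fun y _ => hstep a y
      _ = ∑ y : Fin n → X, |∏ i, f (y i) - ∏ i, g (y i)| + ∑ a, |f a - g a| := by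
          simp only [Finset.sum_add_distrib, ← Finset.mul_sum, ← Finset.sum_mul, hf₁, hg_prod,
            one_mul, mul_one]
      _ ≤ (n + 1 : ℕ) * ∑ a, |f a - g a| := by
          push_cast
          linarith

theorem tvDist_prodPMF_le (μ ν : PMF X) (n : ℕ) :
    tvDist (prodPMF μ n) (prodPMF ν n) ≤ n * tvDist μ ν := by
  simp only [tvDist, prodPMF_apply_toReal]
  have h := sum_abs_prod_sub_prod_le (fun a => ENNReal.toReal_nonneg (a := μ a))
    (fun a => ENNReal.toReal_nonneg (a := ν a)) μ.sum_toReal ν.sum_toReal n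
  linarith

theorem prodPMF_map (ν : PMF S) (f : S → X) (n : ℕ) :
    (prodPMF ν n).map (fun v i => f (v i)) = prodPMF (ν.map f) n := by
  classical
  ext x
  simp only [PMF.map_apply, prodPMF, PMF.ofFintype_apply, tsum_fintype, Fintype.prod_sum,
    Fintype.prod_ite_zero]
  refine Finset.sum_congr rfl fun v _ => ?_
  simp only [funext_iff]
  congr!

theorem prodPMF_uniformOfFintype [Nonempty S] (n : ℕ) :
    prodPMF (PMF.uniformOfFintype S) n = PMF.uniformOfFintype (Fin n → S) := by
  ext x
  simp [prodPMF, PMF.uniformOfFintype_apply, ENNReal.inv_pow]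

end ProductDistributions

theorem PMF.map_uniformOfFintype_equiv {α β : Type*} [Fintype α] [Nonempty α] [Fintype β]
    [Nonempty β] (e : α ≃ β) : (uniformOfFintype α).map e = uniformOfFintype β := by
  ext b
  rw [map_apply, tsum_eq_single (e.symm b) fun a ha => if_neg fun h => ha (by simp [h]),
    if_pos (e.apply_symm_apply b).symm, uniformOfFintype_apply, uniformOfFintype_apply,
    Fintype.card_congr e]

-- Block `i` holds the letters `i * M, …, i * M + (M - 1)`, as in `Abar`.
def blocksEquiv (β : Type*) (n M : ℕ) : (Fin (n * M) → β) ≃ (Fin n → Fin M → β) :=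
  (finProdFinEquiv.arrowCongr (Equiv.refl β)).symm.trans (Equiv.curry _ _ _)

theorem Abar_eq_blocksEquiv {X : Type*} (m : ℕ → ℕ) (A' : ∀ n : ℕ, (Fin (m n) → Bool) → X)
    (n : ℕ) (u : Fin (n * m n) → Bool) :
    Abar m A' n u = fun i => A' n (blocksEquiv Bool n (m n) u i) := by
  funext i
  show A' n _ = A' n _
  congr 1
  funext j
  exact congrArg u (Fin.ext (by simp; ring))

theorem map_Abar_unif {X : Type*} [Fintype X] (m : ℕ → ℕ) (A' : ∀ n : ℕ, (Fin (m n) → Bool) → X)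
    (n : ℕ) : (unif (n * m n)).map (Abar m A' n) = prodPMF ((unif (m n)).map (A' n)) n := by
  calc (unif (n * m n)).map (Abar m A' n)
      = ((unif (n * m n)).map (blocksEquiv Bool n (m n))).map fun v i => A' n (v i) := by
        rw [PMF.map_comp]
        congr 1
        funext u
        exact Abar_eq_blocksEquiv m A' n u
    _ = (prodPMF (unif (m n)) n).map fun v i => A' n (v i) := by
        rw [unif, unif, PMF.map_uniformOfFintype_equiv, prodPMF_uniformOfFintype]
    _ = prodPMF ((unif (m n)).map (A' n)) n := prodPMF_map _ _ _

theorem abs_prTrue_Abar_sub_prTrue_prodPMF_le {X : Type*} [Fintype X] (μ : PMF X) (m : ℕ → ℕ)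
    (A' : ∀ n : ℕ, (Fin (m n) → Bool) → X) (n : ℕ) (F : (Fin n → X) → Bool) :
    |prTrue (unif (n * m n)) (fun u => F (Abar m A' n u)) - prTrue (prodPMF μ n) F|
      ≤ 2 * n * tvDist ((unif (m n)).map (A' n)) μ := by
  rw [← prTrue_map, map_Abar_unif, mul_assoc]
  exact (abs_prTrue_sub_le_two_mul_tvDist _ _ F).trans
    (mul_le_mul_of_nonneg_left (tvDist_prodPMF_le _ _ n) zero_le_two)

open Asymptotics Filter Topology

theorem Negligible.mono {f g : ℕ → ℝ} (hg : Negligible g) (h : ∀ k, |f k| ≤ g k) :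
    Negligible f :=
  fun p hp => (hg p hp).imp fun _ hN k hk => (h k).trans_lt ((le_abs_self _).trans_lt (hN k hk))

theorem Negligible.add {f g : ℕ → ℝ} (hf : Negligible f) (hg : Negligible g) :
    Negligible fun k => f k + g k := by
  intro p hp
  have h2p : ∀ k : ℕ, 0 < (Polynomial.C 2 * p).eval (k : ℝ) := fun k => by
    simpa [Polynomial.eval_mul] using hp k
  obtain ⟨N₁, hN₁⟩ := hf _ h2p
  obtain ⟨N₂, hN₂⟩ := hg _ h2p
  refine ⟨max N₁ N₂, fun k hk => ?_⟩
  have hf' := hN₁ k (le_of_max_le_left hk)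
  have hg' := hN₂ k (le_of_max_le_right hk)
  simp only [Polynomial.eval_mul, Polynomial.eval_C] at hf' hg'
  calc |f k + g k| ≤ |f k| + |g k| := abs_add_le _ _
    _ < 1 / (2 * p.eval (k : ℝ)) + 1 / (2 * p.eval (k : ℝ)) := add_lt_add hf' hg'
    _ = 1 / p.eval (k : ℝ) := by field_simp; ring

theorem Negligible.of_superpolynomialDecay {f : ℕ → ℝ}
    (hf : SuperpolynomialDecay atTop (fun k : ℕ => (k : ℝ)) f) : Negligible f := by
  intro p hp
  have hpf : Tendsto (fun k : ℕ => |p.eval (k : ℝ) * f k|) atTop (𝓝 0) := by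
    simpa using ((hf.polynomial_mul p) 0).abs
  obtain ⟨N, hN⟩ := eventually_atTop.1 (hpf.eventually (gt_mem_nhds one_pos))
  refine ⟨N, fun k hk => ?_⟩
  rw [lt_div_iff₀ (hp k), mul_comm]
  simpa [abs_mul, abs_of_pos (hp k)] using hN k hk

theorem Asymptotics.SuperpolynomialDecay.comp_of_le {f : ℕ → ℝ} {l : ℕ → ℕ}
    (hf : SuperpolynomialDecay atTop (fun n : ℕ => (n : ℝ)) f) (hl : ∀ k, k ≤ l k) :
    SuperpolynomialDecay atTop (fun k : ℕ => (k : ℝ)) (fun k => f (l k)) := by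
  intro n
  have hfl := ((hf n).comp (tendsto_atTop_mono hl tendsto_id)).norm
  rw [norm_zero] at hfl
  refine squeeze_zero_norm (fun k => ?_) hfl
  simp only [Function.comp_apply, norm_mul, norm_pow, Real.norm_natCast]
  gcongr
  exact hl k

theorem superpolynomialDecay_mul_two_pow_neg :
    SuperpolynomialDecay atTop (fun n : ℕ => (n : ℝ)) fun n => 2 * n * (2 : ℝ) ^ (-(n : ℤ)) := by
  have hgeom : SuperpolynomialDecay atTop (fun n : ℕ => (n : ℝ)) fun n => (2⁻¹ : ℝ) ^ n :=
    fun k => tendsto_pow_const_mul_const_pow_of_abs_lt_one k (by norm_num [abs_of_pos])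
  refine (hgeom.param_mul.const_mul 2).congr fun n => ?_
  simp only [Pi.mul_apply, zpow_neg, zpow_natCast, inv_pow, mul_assoc]

theorem ecs_system_indistinguishable_from_prng_general
    {X : Type*} [Fintype X] (μ : PMF X)
    (m : ℕ → ℕ) (A' : ∀ n : ℕ, (Fin (m n) → Bool) → X)
    (hA' : ∀ n : ℕ, tvDist ((unif (m n)).map (A' n)) μ ≤ (2 : ℝ) ^ (-(n : ℤ)))
    (l : ℕ → ℕ) (hl : StrictMono l)
    (G : ∀ k : ℕ, (Fin k → Bool) → (Fin (l k * m (l k)) → Bool))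
    (hG : ∀ D : ∀ k : ℕ, (Fin (l k * m (l k)) → Bool) → Bool,
      Negligible (fun k =>
        |prTrue (unif k) (fun s => D k (G k s))
          - prTrue (unif (l k * m (l k))) (fun u => D k u)|))
    (B : ∀ k : ℕ, (Fin k → Bool) → (Fin (l k) → X))
    (hB : ∀ k : ℕ, B k = fun s => Abar m A' (l k) (G k s))
    (T : ∀ k : ℕ, (Fin (l k) → X) → Bool) :
    Negligible (fun k =>
      |prTrue (unif k) (fun s => T k (B k s))
        - prTrue (prodPMF μ (l k)) (T k)|) := by
  obtain rfl : B = fun k s => Abar m A' (l k) (G k s) := funext hB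
  have hsim : Negligible fun k => 2 * l k * (2 : ℝ) ^ (-(l k : ℤ)) := .of_superpolynomialDecay
    (superpolynomialDecay_mul_two_pow_neg.comp_of_le fun _ => hl.le_apply)
  refine ((hG fun k u => T k (Abar m A' (l k) u)).add hsim).mono fun k => ?_
  rw [abs_abs]
  calc _ ≤ |prTrue (unif k) (fun s => T k (Abar m A' (l k) (G k s)))
            - prTrue (unif (l k * m (l k))) (fun u => T k (Abar m A' (l k) u))|
          + |prTrue (unif (l k * m (l k))) (fun u => T k (Abar m A' (l k) u))
            - prTrue (prodPMF μ (l k)) (T k)| := abs_sub_le _ _ _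
    _ ≤ _ := by
      grw [abs_prTrue_Abar_sub_prTrue_prodPMF_le, hA']

/-- **Theorem 2**: if the physical system `μ` admits a classical simulation `A'` accurate to
`2^(-n)` in total variation, and `G` is a cryptographic pseudorandom generator, then the
pseudorandom simulator `B_k = Ā_{l k} ∘ G_k` is indistinguishable from the real `l k`-fold
system `μ^⊗(l k)` by every family of tests. -/
theorem ecs_system_indistinguishable_from_prng
    {X : Type*} [Fintype X] [Nonempty X] (μ : PMF X)
    (m : ℕ → ℕ) (A' : ∀ n : ℕ, (Fin (m n) → Bool) → X)
    (hA' : ∀ n : ℕ, tvDist ((unif (m n)).map (A' n)) μ ≤ (2 : ℝ) ^ (-(n : ℤ)))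
    (l : ℕ → ℕ) (hl : StrictMono l)
    (G : ∀ k : ℕ, (Fin k → Bool) → (Fin (l k * m (l k)) → Bool))
    (hG : ∀ D : ∀ k : ℕ, (Fin (l k * m (l k)) → Bool) → Bool,
      Negligible (fun k =>
        |prTrue (unif k) (fun s => D k (G k s))
          - prTrue (unif (l k * m (l k))) (fun u => D k u)|))
    (B : ∀ k : ℕ, (Fin k → Bool) → (Fin (l k) → X))
    (hB : ∀ k : ℕ, B k = fun s => Abar m A' (l k) (G k s))
    (T : ∀ k : ℕ, (Fin (l k) → X) → Bool) :
    Negligible (fun k =>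
      |prTrue (unif k) (fun s => T k (B k s))
        - prTrue (prodPMF μ (l k)) (T k)|) :=
  ecs_system_indistinguishable_from_prng_general μ m A' hA' l hl G hG B hB T
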